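/- Let ψ_1, ψ_2, …, ψ_{n+1} be complex polynomials with ψ_1'' = 0, ψ_1 ≠ 0, and ψ_k'' = ψ_{k−1} for 2 ≤ k ≤ n+1, and set Θ_n = W(ψ_1, …, ψ_n), Θ_{n+1} = W(ψ_1, …, ψ_{n+1}). Then for every z ∈ ℂ with Θ_n(z) ≠ 0, the function φ = Θ_{n+1}/Θ_n satisfies the Schrödinger equation −φ''(z) + u(z) φ(z) = 0 with zero eigenvalue, where u = −2 (Θ_n'' Θ_n − (Θ_n')²)/Θ_n² (that is, u = −2 (d²/dz²) ln Θ_n). -/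

import Mathlib

/-!
With `φ = Θ_{n+1}/Θ_n` and `u = -2 (log Θ_n)''` one has
`Θ_n² (φ'' - u φ) = Θ_{n+1}'' Θ_n - 2 Θ_{n+1}' Θ_n' + Θ_{n+1} Θ_n''`, Hirota's bilinear
derivative `D² Θ_{n+1} · Θ_n`, so it suffices to show that this polynomial vanishes.

Let `v_r = (ψ_1^{(r)}, …, ψ_{n+1}^{(r)})`. Then `Θ_{n+1}` and its first two derivatives are
determinants of rows `v_i`, and `Θ_n` and its derivatives are the same determinants with the last
column deleted. Since `ψ_1'' = 0` and `ψ_{k+1}'' = ψ_k`, the row `v_{r+2}` is `v_r` with its last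
entry deleted and a `0` put in front, so the latter are also determinants with the first column
deleted and the row indices shifted by two. Deleting a column is adjoining a unit row, and the
two Grassmann–Plücker relations obtained by adjoining `e_last` and `e_0` add up to
`D² Θ_{n+1} · Θ_n = 0`.
-/

open Polynomial

/-- The Wronskian of a finite family of polynomials:
`W(p_1, …, p_ℓ) = det [ (d/dz)^{i-1} p_j ]`. -/
noncomputable def wronskian {l : ℕ} (p : Fin l → Polynomial ℂ) : Polynomial ℂ :=
  (Matrix.of fun i j : Fin l => (Polynomial.derivative^[(i : ℕ)] (p j))).det

section Rows

variable {R : Type*} [CommRing R]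

theorem snoc_val_eq {k : ℕ} {α : Sort*} (g : ℕ → α) :
    (Fin.snoc (fun i : Fin k => g i) (g k) : Fin (k + 1) → α) =
      fun i : Fin (k + 1) => g i :=
  funext fun i => Fin.lastCases (by simp) (fun i => by simp) i

theorem snoc_comp_right {k : ℕ} {α β γ : Type*} (f : Fin k → β → α) (y : β → α)
    (g : γ → β) :
    (fun i => (Fin.snoc f y : Fin (k + 1) → β → α) i ∘ g) =
      Fin.snoc (fun i => f i ∘ g) (y ∘ g) :=
  Fin.comp_snoc (· ∘ g) f y

theorem snoc_comp_castSucc_succAbove {s : ℕ} {α : Sort*} (f : Fin (s + 1) → α) (y : α)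
    (k : Fin (s + 1)) :
    (Fin.snoc f y : Fin (s + 2) → α) ∘ k.castSucc.succAbove =
      Fin.snoc (f ∘ k.succAbove) y := by
  funext i
  refine Fin.lastCases ?_ (fun i => ?_) i
  · simp [Fin.succAbove_of_le_castSucc _ _ (Fin.castSucc_le_castSucc_iff.2 (Fin.le_last k))]
  · simp [Fin.castSucc_succAbove_castSucc]

theorem det_snoc_eq_sum {N : ℕ} (a : Fin N → Fin (N + 1) → R) (y : Fin (N + 1) → R) :
    (Matrix.of (Fin.snoc a y)).det =
      ∑ j : Fin (N + 1),
        (-1) ^ (N + (j : ℕ)) * (Matrix.of fun i => a i ∘ j.succAbove).det * y j := by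
  rw [Matrix.det_succ_row _ (Fin.last N)]
  refine Finset.sum_congr rfl fun j _ => ?_
  have hminor : (Matrix.of (Fin.snoc a y)).submatrix (Fin.last N).succAbove j.succAbove =
      Matrix.of fun i => a i ∘ j.succAbove := by
    ext i i'
    simp [Fin.succAbove_last]
  rw [hminor, Matrix.of_apply, Fin.snoc_last, Fin.val_last, pow_add]
  ring

theorem grassmann_pluecker {N : ℕ} (a : Fin N → Fin (N + 1) → R)
    (c : Fin (N + 2) → Fin (N + 1) → R) :
    ∑ k : Fin (N + 2), (-1) ^ (k : ℕ) * (Matrix.of (Fin.snoc a (c k))).det *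
      (Matrix.of (c ∘ k.succAbove)).det = 0 := by
  let Z : Matrix (Fin (N + 2)) (Fin (N + 2)) R :=
    Matrix.of fun k => Fin.cons (Matrix.of (Fin.snoc a (c k))).det (c k)
  let L : Fin (N + 2) → R :=
    Fin.cons 0 fun j => (-1) ^ (N + (j : ℕ)) * (Matrix.of fun i => a i ∘ j.succAbove).det
  -- Laplace expansion along the last row writes column `0` of `Z` as a combination of the others
  have hcol : Z.updateCol 0 (fun k => ∑ i, L i • Z k i) = Z := by
    ext k i
    refine Fin.cases ?_ (fun i => ?_) i
    · simp [Z, L, Fin.sum_univ_succ, det_snoc_eq_sum]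
    · simp [Z]
  have hZ : Z.det = 0 := by
    simpa [L] using (congrArg Matrix.det hcol).symm.trans (Matrix.det_updateCol_sum Z 0 L)
  rwa [Matrix.det_succ_column_zero] at hZ

theorem det_snoc_self {N : ℕ} (a : Fin N → Fin (N + 1) → R) (i : Fin N) :
    (Matrix.of (Fin.snoc a (a i))).det = 0 :=
  Matrix.det_zero_of_row_eq (Fin.castSucc_lt_last i).ne (funext fun _ => by simp)

theorem grassmann_pluecker_three {s : ℕ} (a : Fin (s + 1) → Fin (s + 2) → R)
    (e : Fin s → Fin (s + 1)) (x y z : Fin (s + 2) → R) :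
    (Matrix.of (Fin.snoc a x)).det * (Matrix.of (Fin.snoc (Fin.snoc (a ∘ e) y) z)).det
      - (Matrix.of (Fin.snoc a y)).det * (Matrix.of (Fin.snoc (Fin.snoc (a ∘ e) x) z)).det
      + (Matrix.of (Fin.snoc a z)).det * (Matrix.of (Fin.snoc (Fin.snoc (a ∘ e) x) y)).det
        = 0 := by
  have hp := grassmann_pluecker a (Fin.snoc (Fin.snoc (Fin.snoc (a ∘ e) x) y) z)
  simp only [Fin.sum_univ_castSucc, Fin.snoc_castSucc, Fin.snoc_last, Fin.val_castSucc,
    Fin.val_last, Function.comp_apply, snoc_comp_castSucc_succAbove, Fin.succAbove_last,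
    Fin.snoc_comp_castSucc, det_snoc_self, mul_zero, zero_mul, Finset.sum_const_zero,
    zero_add] at hp
  rw [← neg_one_pow_mul_eq_zero_iff (n := s)]
  linear_combination hp

theorem grassmann_pluecker_four {s : ℕ} (a : Fin (s + 2) → Fin (s + 3) → R)
    (e : Fin s → Fin (s + 2)) (x y z w : Fin (s + 3) → R) :
    (Matrix.of (Fin.snoc a x)).det
        * (Matrix.of (Fin.snoc (Fin.snoc (Fin.snoc (a ∘ e) y) z) w)).det
      - (Matrix.of (Fin.snoc a y)).det
        * (Matrix.of (Fin.snoc (Fin.snoc (Fin.snoc (a ∘ e) x) z) w)).det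
      + (Matrix.of (Fin.snoc a z)).det
        * (Matrix.of (Fin.snoc (Fin.snoc (Fin.snoc (a ∘ e) x) y) w)).det
      - (Matrix.of (Fin.snoc a w)).det
        * (Matrix.of (Fin.snoc (Fin.snoc (Fin.snoc (a ∘ e) x) y) z)).det = 0 := by
  have hp := grassmann_pluecker a (Fin.snoc (Fin.snoc (Fin.snoc (Fin.snoc (a ∘ e) x) y) z) w)
  simp only [Fin.sum_univ_castSucc, Fin.snoc_castSucc, Fin.snoc_last, Fin.val_castSucc,
    Fin.val_last, Function.comp_apply, snoc_comp_castSucc_succAbove, Fin.succAbove_last,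
    Fin.snoc_comp_castSucc, det_snoc_self, mul_zero, zero_mul, Finset.sum_const_zero,
    zero_add] at hp
  rw [← neg_one_pow_mul_eq_zero_iff (n := s)]
  linear_combination hp

theorem det_snoc_single_last {N : ℕ} (x : Fin N → Fin (N + 1) → R) :
    (Matrix.of (Fin.snoc x (Pi.single (Fin.last N) 1))).det =
      (Matrix.of fun i => x i ∘ Fin.castSucc).det := by
  rw [det_snoc_eq_sum, Finset.sum_eq_single (Fin.last N)]
  · simp [Fin.succAbove_last]
  · intro j _ hj
    rw [Pi.single_eq_of_ne hj, mul_zero]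
  · simp

theorem det_snoc_single_zero {N : ℕ} (x : Fin N → Fin (N + 1) → R) :
    (Matrix.of (Fin.snoc x (Pi.single 0 1))).det =
      (-1) ^ N * (Matrix.of fun i => x i ∘ Fin.succ).det := by
  rw [det_snoc_eq_sum, Finset.sum_eq_single 0]
  · simp
  · intro j _ hj
    rw [Pi.single_eq_of_ne hj, mul_zero]
  · simp

theorem derivative_det {n : Type*} [Fintype n] [DecidableEq n] (M : Matrix n n R[X]) :
    derivative M.det = ∑ i, (M.updateRow i fun j => derivative (M i j)).det := by
  simp only [← Matrix.det_transpose M, ← Matrix.det_transpose (M.updateRow _ _),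
    Matrix.det_apply', Matrix.transpose_apply, map_sum, derivative_intCast_mul,
    derivative_prod_finset, Finset.mul_sum]
  rw [Finset.sum_comm]
  refine Finset.sum_congr rfl fun i _ => Finset.sum_congr rfl fun σ _ => ?_
  rw [← Finset.mul_prod_erase _ _ (Finset.mem_univ i)]
  simp only [Matrix.updateRow_self]
  have hrest : ∀ j ∈ Finset.univ.erase i,
      M.updateRow i (fun j => derivative (M i j)) j (σ j) = M j (σ j) := fun j hj => by
    rw [Matrix.updateRow_ne (Finset.ne_of_mem_erase hj)]
  rw [Finset.prod_congr rfl hrest]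
  ring

theorem derivative_det_snoc {k : ℕ} (v : ℕ → Fin (k + 2) → R[X])
    (hv : ∀ r j, derivative (v r j) = v (r + 1) j) (r : ℕ) :
    derivative (Matrix.of (Fin.snoc (fun i : Fin (k + 1) => v i) (v r))).det =
      (Matrix.of (Fin.snoc (fun i : Fin (k + 1) => v i) (v (r + 1)))).det +
        (Matrix.of (Fin.snoc (Fin.snoc (fun i : Fin k => v i) (v (k + 1))) (v r))).det := by
  have hrow : ∀ (i : Fin (k + 2)) (b : Fin (k + 2) → R[X]),
      (Matrix.of (Fin.snoc (fun i : Fin (k + 1) => v i) (v r))).updateRow i b =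
        Matrix.of (Function.update (Fin.snoc (fun i : Fin (k + 1) => v i) (v r)) i b) :=
    fun _ _ => rfl
  simp only [derivative_det, hrow, Matrix.of_apply, hv, Fin.sum_univ_castSucc,
    ← Fin.snoc_update, Fin.update_snoc_last, Fin.snoc_castSucc, Fin.snoc_last]
  have hdup : ∀ i : Fin k, (Matrix.of (Fin.snoc (Function.update (fun i : Fin (k + 1) => v i)
      i.castSucc fun j => v (i.castSucc + 1) j) (v r))).det = 0 := fun i =>
    Matrix.det_zero_of_row_eq (i := i.castSucc.castSucc) (j := i.succ.castSucc)
      (by simp [Fin.ext_iff]) (funext fun j => by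
        simp [Fin.ext_iff, -Fin.castSucc_succ])
  rw [Finset.sum_eq_zero fun i _ => hdup i, zero_add, add_comm, ← snoc_val_eq v,
    Fin.update_snoc_last]
  rfl

theorem derivative_det_rows {k : ℕ} (v : ℕ → Fin (k + 2) → R[X])
    (hv : ∀ r j, derivative (v r j) = v (r + 1) j) :
    derivative (Matrix.of fun i : Fin (k + 2) => v i).det =
      (Matrix.of (Fin.snoc (fun i : Fin (k + 1) => v i) (v (k + 2)))).det := by
  have hdup : (Matrix.of (Fin.snoc (Fin.snoc (fun i : Fin k => v i) (v (k + 1)))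
      (v (k + 1)))).det = 0 := by
    simpa using det_snoc_self (Fin.snoc (fun i : Fin k => v i) (v (k + 1))) (Fin.last k)
  rw [← snoc_val_eq v, derivative_det_snoc v hv, hdup, add_zero]

theorem pluecker_rows_castSucc {m : ℕ} (v : ℕ → Fin (m + 3) → R) :
    (Matrix.of fun i : Fin (m + 3) => v i).det *
        (Matrix.of (Fin.snoc (fun i : Fin (m + 1) => v i ∘ Fin.castSucc)
          (v (m + 3) ∘ Fin.castSucc))).det
      - (Matrix.of (Fin.snoc (fun i : Fin (m + 2) => v i) (v (m + 3)))).det *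
        (Matrix.of (Fin.snoc (fun i : Fin (m + 1) => v i ∘ Fin.castSucc)
          (v (m + 2) ∘ Fin.castSucc))).det
      + (Matrix.of fun i : Fin (m + 2) => v i ∘ Fin.castSucc).det *
        (Matrix.of (Fin.snoc (Fin.snoc (fun i : Fin (m + 1) => v i) (v (m + 2)))
          (v (m + 3)))).det = 0 := by
  have h := grassmann_pluecker_three (fun i : Fin (m + 2) => v i) Fin.castSucc
    (v (m + 2)) (v (m + 3)) (Pi.single (Fin.last (m + 2)) 1)
  simp only [det_snoc_single_last, snoc_val_eq, snoc_comp_right] at h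
  exact h

theorem pluecker_rows_succ {m : ℕ} (v : ℕ → Fin (m + 3) → R)
    (hzero : ∀ r, v (r + 2) 0 = 0)
    (hshift : ∀ r, v (r + 2) ∘ Fin.succ = v r ∘ Fin.castSucc) :
    (Matrix.of fun i : Fin (m + 3) => v i).det *
        (Matrix.of (Fin.snoc (Fin.snoc (fun i : Fin m => v i ∘ Fin.castSucc)
          (v (m + 1) ∘ Fin.castSucc)) (v (m + 2) ∘ Fin.castSucc))).det
      - (Matrix.of (Fin.snoc (fun i : Fin (m + 2) => v i) (v (m + 3)))).det *
        (Matrix.of (Fin.snoc (fun i : Fin (m + 1) => v i ∘ Fin.castSucc)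
          (v (m + 2) ∘ Fin.castSucc))).det
      + (Matrix.of (Fin.snoc (fun i : Fin (m + 2) => v i) (v (m + 4)))).det *
        (Matrix.of fun i : Fin (m + 2) => v i ∘ Fin.castSucc).det = 0 := by
  have h := grassmann_pluecker_four (fun i : Fin (m + 2) => v i) (fun i => i.succ.succ)
    (v (m + 2)) (v (m + 3)) (v (m + 4)) (Pi.single 0 1)
  have hlast : (Matrix.of (Fin.snoc (Fin.snoc (Fin.snoc ((fun i : Fin (m + 2) => v i) ∘
      fun i : Fin m => i.succ.succ) (v (m + 2))) (v (m + 3))) (v (m + 4)))).det = 0 := by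
    refine Matrix.det_eq_zero_of_column_eq_zero 0 fun i => ?_
    refine Fin.lastCases ?_ (Fin.lastCases ?_ (Fin.lastCases ?_ fun i => ?_)) i <;>
      simp [hzero]
  simp only [det_snoc_single_zero, snoc_comp_right, Function.comp_apply, Fin.val_succ, hshift,
    snoc_val_eq, snoc_val_eq (fun r => v r ∘ Fin.castSucc), hlast] at h
  rw [← neg_one_pow_mul_eq_zero_iff (n := m + 2)]
  linear_combination h

noncomputable def hirotaD2 (P Q : R[X]) : R[X] :=
  derivative (derivative P) * Q - 2 * derivative P * derivative Q + P * derivative (derivative Q)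

theorem hirotaD2_det_rows_eq_zero {m : ℕ} (v : ℕ → Fin (m + 3) → R[X])
    (hder : ∀ r j, derivative (v r j) = v (r + 1) j) (hzero : ∀ r, v (r + 2) 0 = 0)
    (hshift : ∀ r, v (r + 2) ∘ Fin.succ = v r ∘ Fin.castSucc) :
    hirotaD2 (Matrix.of fun i : Fin (m + 3) => v i).det
      (Matrix.of fun i : Fin (m + 2) => v i ∘ Fin.castSucc).det = 0 := by
  have hder' : ∀ r j, derivative ((v r ∘ Fin.castSucc) j) = (v (r + 1) ∘ Fin.castSucc) j :=
    fun r j => hder r j.castSucc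
  have hP1 := derivative_det_rows v hder
  have hP2 := derivative_det_snoc v hder (m + 3)
  have hQ1 := derivative_det_rows _ hder'
  have hQ2 := derivative_det_snoc _ hder' (m + 2)
  unfold hirotaD2
  rw [hP1, hP2, hQ1, hQ2]
  linear_combination pluecker_rows_castSucc v + pluecker_rows_succ v hzero hshift

end Rows

section Schroedinger

variable {𝕜 : Type*} [NontriviallyNormedField 𝕜]

theorem deriv_eval_div_eval (P Q : 𝕜[X]) {z : 𝕜} (hz : Q.eval z ≠ 0) :
    deriv (fun w => P.eval w / Q.eval w) z =
      (derivative P * Q - P * derivative Q).eval z / (Q ^ 2).eval z := by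
  refine ((P.hasDerivAt z).div (Q.hasDerivAt z) hz).deriv.trans ?_
  simp

theorem schroedinger_of_hirotaD2_eq_zero (P Q : 𝕜[X]) (h : hirotaD2 P Q = 0) {z : 𝕜}
    (hz : Q.eval z ≠ 0) :
    - deriv (deriv fun w => P.eval w / Q.eval w) z
      + (-2 * ((derivative (derivative Q) * Q - derivative Q ^ 2).eval z) / Q.eval z ^ 2)
        * (P.eval z / Q.eval z) = 0 := by
  have hnear : deriv (fun w => P.eval w / Q.eval w) =ᶠ[nhds z]
      fun w => (derivative P * Q - P * derivative Q).eval w / (Q ^ 2).eval w := by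
    filter_upwards [Q.continuous.continuousAt.eventually_ne hz] with w hw
    exact deriv_eval_div_eval P Q hw
  have hQ2 : (Q ^ 2).eval z ≠ 0 := by simpa using hz
  have hz' := congrArg (eval z) h
  rw [hnear.deriv_eq, deriv_eval_div_eval _ _ hQ2]
  simp only [hirotaD2, derivative_mul, derivative_sub, derivative_pow, eval_add, eval_sub,
    eval_mul, eval_pow, eval_ofNat, eval_C, eval_zero] at hz' ⊢
  field_simp
  linear_combination (-(Q.eval z) ^ 2) * hz'

end Schroedinger

theorem hirotaD2_wronskian_eq_zero (n : ℕ) (ψ : Fin (n + 1) → ℂ[X])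
    (h1 : derivative (derivative (ψ 0)) = 0)
    (hrec : ∀ k : Fin n, derivative (derivative (ψ k.succ)) = ψ k.castSucc) :
    hirotaD2 (wronskian ψ) (wronskian fun i : Fin n => ψ i.castSucc) = 0 := by
  rcases n with _ | _ | m
  · have hP : wronskian ψ = ψ 0 := by simp [_root_.wronskian]
    have hQ : (wronskian fun i : Fin 0 => ψ i.castSucc) = 1 := Matrix.det_fin_zero
    simp [hirotaD2, hP, hQ, h1]
  · have h10 : derivative (derivative (ψ 1)) = ψ 0 := hrec 0
    have hP : wronskian ψ = ψ 0 * derivative (ψ 1) - ψ 1 * derivative (ψ 0) := by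
      simp [_root_.wronskian, Matrix.det_fin_two]
    have hQ : (wronskian fun i : Fin 1 => ψ i.castSucc) = ψ 0 := by simp [_root_.wronskian]
    simp only [hirotaD2, hP, hQ, derivative_mul, derivative_sub, derivative_add, h1, h10,
      derivative_zero]
    ring
  · let v : ℕ → Fin (m + 3) → ℂ[X] := fun r j => derivative^[r] (ψ j)
    have hder : ∀ r j, derivative (v r j) = v (r + 1) j :=
      fun r j => (Function.iterate_succ_apply' _ r _).symm
    have hzero : ∀ r, v (r + 2) 0 = 0 := fun r => by
      simp only [v, Function.iterate_succ_apply, h1]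
      exact Function.iterate_fixed derivative_zero r
    have hshift : ∀ r, v (r + 2) ∘ Fin.succ = v r ∘ Fin.castSucc := fun r =>
      funext fun j => by simp [v, Function.iterate_add_apply, hrec j]
    exact hirotaD2_det_rows_eq_zero v hder hzero hshift

theorem adlerMoser_schroedinger_general (n : ℕ) (ψ : Fin (n + 1) → Polynomial ℂ)
    (h1 : Polynomial.derivative (Polynomial.derivative (ψ 0)) = 0)
    (hrec : ∀ k : Fin n,
      Polynomial.derivative (Polynomial.derivative (ψ k.succ)) = ψ k.castSucc)
    (Θn Θn1 : Polynomial ℂ)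
    (hΘn : Θn = wronskian (fun i : Fin n => ψ i.castSucc))
    (hΘn1 : Θn1 = wronskian ψ) :
    ∀ z : ℂ, Θn.eval z ≠ 0 →
      - deriv (deriv (fun w : ℂ => Θn1.eval w / Θn.eval w)) z
        + (-2 * ((Polynomial.derivative (Polynomial.derivative Θn) * Θn
              - (Polynomial.derivative Θn) ^ 2).eval z) / (Θn.eval z) ^ 2)
          * (Θn1.eval z / Θn.eval z) = 0 := by
  subst hΘn hΘn1
  exact fun z hz =>
    schroedinger_of_hirotaD2_eq_zero _ _ (hirotaD2_wronskian_eq_zero n ψ h1 hrec) hz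

/-- **Ratios of consecutive Adler–Moser Wronskians are zero-energy eigenstates.**
With `ψ_1'' = 0`, `ψ_1 ≠ 0`, `ψ_k'' = ψ_{k-1}`, `Θ_n = W(ψ_1, …, ψ_n)` and
`Θ_{n+1} = W(ψ_1, …, ψ_{n+1})`, the function `φ = Θ_{n+1}/Θ_n` satisfies the
Schrödinger equation `−φ'' + u φ = 0` with potential
`u = −2 (Θ_n'' Θ_n − (Θ_n')²)/Θ_n² = −2 (ln Θ_n)''` wherever `Θ_n ≠ 0`. -/
theorem adlerMoser_schroedinger (n : ℕ) (ψ : Fin (n + 1) → Polynomial ℂ)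
    (h1 : Polynomial.derivative (Polynomial.derivative (ψ 0)) = 0)
    (hne : ψ 0 ≠ 0)
    (hrec : ∀ k : Fin n,
      Polynomial.derivative (Polynomial.derivative (ψ k.succ)) = ψ k.castSucc)
    (Θn Θn1 : Polynomial ℂ)
    (hΘn : Θn = wronskian (fun i : Fin n => ψ i.castSucc))
    (hΘn1 : Θn1 = wronskian ψ) :
    ∀ z : ℂ, Θn.eval z ≠ 0 →
      - deriv (deriv (fun w : ℂ => Θn1.eval w / Θn.eval w)) z
        + (-2 * ((Polynomial.derivative (Polynomial.derivative Θn) * Θn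
              - (Polynomial.derivative Θn) ^ 2).eval z) / (Θn.eval z) ^ 2)
          * (Θn1.eval z / Θn.eval z) = 0 :=
  adlerMoser_schroedinger_general n ψ h1 hrec Θn Θn1 hΘn hΘn1
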